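/- arXiv:1305.6156 — 3 statements merged into one kernel-verified Lean document; each statement's English description precedes it below -/
import Mathlib

section
/- The covariance of the Horvitz-Thompson estimators of totals under two different exposures d_k and d_l equals Σ_i Σ_{j≠i} (y_i(d_k)/π_i(d_k))(y_j(d_l)/π_j(d_l))(π_{ij}(d_k,d_l) - π_i(d_k)π_j(d_l)) − Σ_i y_i(d_k) y_i(d_l). -/
open Finset

noncomputable def expect {Ωs : Type*} [Fintype Ωs] (p : Ωs → ℝ) (X : Ωs → ℝ) : ℝ :=
  ∑ ω, p ω * X ω

noncomputable def Var' {Ωs : Type*} [Fintype Ωs] (p : Ωs → ℝ) (X : Ωs → ℝ) : ℝ :=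
  expect p (fun ω => (X ω - expect p X) ^ 2)

noncomputable def Cov' {Ωs : Type*} [Fintype Ωs] (p : Ωs → ℝ) (X Y : Ωs → ℝ) : ℝ :=
  expect p (fun ω => (X ω - expect p X) * (Y ω - expect p Y))

lemma cov_eq {Ωs : Type*} [Fintype Ωs] (p : Ωs → ℝ) (hp1 : ∑ ω, p ω = 1) (X Y : Ωs → ℝ) :
    Cov' p X Y = expect p (fun ω => X ω * Y ω) - expect p X * expect p Y := by
  simp only [Cov', _root_.expect]
  have h : ∀ ω, p ω * ((X ω - ∑ ω', p ω' * X ω') * (Y ω - ∑ ω', p ω' * Y ω'))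
      = p ω * (X ω * Y ω) - (∑ ω', p ω' * X ω') * (p ω * Y ω)
        - (∑ ω', p ω' * Y ω') * (p ω * X ω)
        + p ω * ((∑ ω', p ω' * X ω') * (∑ ω', p ω' * Y ω')) := by intro ω; ring
  rw [Finset.sum_congr rfl (fun ω _ => h ω)]
  rw [Finset.sum_add_distrib, Finset.sum_sub_distrib, Finset.sum_sub_distrib,
    ← Finset.mul_sum, ← Finset.mul_sum, ← Finset.sum_mul, hp1]
  ring

/-- Covariance of Horvitz-Thompson total estimators under two different exposures. -/
theorem stmt2 {Ωs : Type*} [Fintype Ωs] (p : Ωs → ℝ)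
    (hp0 : ∀ ω, 0 ≤ p ω) (hp1 : ∑ ω, p ω = 1)
    {N : ℕ} {Δ : Type*} [DecidableEq Δ]
    (D : Fin N → Ωs → Δ) (y : Fin N → Δ → ℝ)
    (π : Fin N → Δ → ℝ)
    (hπ : ∀ i d, π i d = ∑ ω, p ω * (if D i ω = d then (1:ℝ) else 0))
    (hπ01 : ∀ i d, 0 < π i d ∧ π i d < 1)
    (dk dl : Δ) (hkl : dk ≠ dl)
    (πijkl : Fin N → Fin N → ℝ)
    (hπijkl : ∀ i j, πijkl i j = ∑ ω, p ω *
      ((if D i ω = dk then (1:ℝ) else 0) * (if D j ω = dl then (1:ℝ) else 0))) :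
    Cov' p (fun ω => ∑ i, (if D i ω = dk then (1:ℝ) else 0) * y i dk / π i dk)
           (fun ω => ∑ i, (if D i ω = dl then (1:ℝ) else 0) * y i dl / π i dl)
      = ∑ i, ∑ j ∈ Finset.univ.erase i,
            (y i dk / π i dk) * (y j dl / π j dl) * (πijkl i j - π i dk * π j dl)
        - ∑ i, y i dk * y i dl := by
  have hπ0 : ∀ i d, π i d ≠ 0 := fun i d => ne_of_gt (hπ01 i d).1
  rw [cov_eq p hp1]
  -- expectations of the HT estimators
  have hEX : ∀ d, expect p (fun ω => ∑ i, (if D i ω = d then (1:ℝ) else 0) * y i d / π i d)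
      = ∑ i, y i d := by
    intro d
    simp only [_root_.expect, Finset.mul_sum]
    rw [Finset.sum_comm]
    refine Finset.sum_congr rfl fun i _ => ?_
    have : ∀ ω, p ω * ((if D i ω = d then (1:ℝ) else 0) * y i d / π i d)
        = (p ω * (if D i ω = d then (1:ℝ) else 0)) * (y i d / π i d) := by
      intro ω; ring
    rw [Finset.sum_congr rfl (fun ω _ => this ω), ← Finset.sum_mul, ← hπ i d,
      mul_comm, div_mul_cancel₀ _ (hπ0 i d)]
  -- expectation of the product
  have hEXY : expect p (fun ω => (∑ i, (if D i ω = dk then (1:ℝ) else 0) * y i dk / π i dk) *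
      (∑ j, (if D j ω = dl then (1:ℝ) else 0) * y j dl / π j dl))
      = ∑ i, ∑ j, (y i dk / π i dk) * (y j dl / π j dl) * πijkl i j := by
    simp only [_root_.expect]
    have h1 : ∀ ω : Ωs, p ω * ((∑ i, (if D i ω = dk then (1:ℝ) else 0) * y i dk / π i dk) *
        (∑ j, (if D j ω = dl then (1:ℝ) else 0) * y j dl / π j dl))
        = ∑ i, ∑ j, (y i dk / π i dk) * (y j dl / π j dl) *
            (p ω * ((if D i ω = dk then (1:ℝ) else 0) * (if D j ω = dl then (1:ℝ) else 0))) := by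
      intro ω
      rw [Finset.sum_mul_sum, Finset.mul_sum]
      refine Finset.sum_congr rfl fun i _ => ?_
      rw [Finset.mul_sum]
      refine Finset.sum_congr rfl fun j _ => ?_
      ring
    rw [Finset.sum_congr rfl (fun ω _ => h1 ω), Finset.sum_comm]
    refine Finset.sum_congr rfl fun i _ => ?_
    rw [Finset.sum_comm]
    refine Finset.sum_congr rfl fun j _ => ?_
    rw [← Finset.mul_sum, ← hπijkl i j]
  have hdiag : ∀ i : Fin N, πijkl i i = 0 := by
    intro i
    rw [hπijkl]
    refine Finset.sum_eq_zero fun ω _ => ?_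
    by_cases h : D i ω = dk
    · simp [h, hkl, (h ▸ hkl : D i ω ≠ dl)]
    · simp [h]
  rw [hEXY, hEX dk, hEX dl]
  -- now pure algebra on sums
  have hfull : ∀ i : Fin N, ∑ j, (y i dk / π i dk) * (y j dl / π j dl) * πijkl i j
      = ∑ j ∈ Finset.univ.erase i, (y i dk / π i dk) * (y j dl / π j dl) * πijkl i j := by
    intro i
    rw [← Finset.add_sum_erase _ _ (Finset.mem_univ i), hdiag i]
    ring
  simp only [hfull]
  have hsplit : ∀ i : Fin N, ∑ j ∈ Finset.univ.erase i,
      (y i dk / π i dk) * (y j dl / π j dl) * (πijkl i j - π i dk * π j dl)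
      = (∑ j ∈ Finset.univ.erase i, (y i dk / π i dk) * (y j dl / π j dl) * πijkl i j)
        - (∑ j ∈ Finset.univ.erase i, (y i dk / π i dk) * (y j dl / π j dl) * (π i dk * π j dl)) := by
    intro i
    rw [← Finset.sum_sub_distrib]
    refine Finset.sum_congr rfl fun j _ => ?_; ring
  simp only [hsplit]
  rw [Finset.sum_sub_distrib]
  have hterm : ∀ i j : Fin N,
      (y i dk / π i dk) * (y j dl / π j dl) * (π i dk * π j dl) = y i dk * y j dl := by
    intro i j
    have h1 : (y i dk / π i dk) * (y j dl / π j dl) * (π i dk * π j dl)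
        = y i dk * y j dl * ((π i dk * π j dl) / (π i dk * π j dl)) := by ring
    rw [h1, div_self (mul_ne_zero (hπ0 i dk) (hπ0 j dl)), mul_one]
  have hcross : ∑ i : Fin N, ∑ j ∈ Finset.univ.erase i,
      (y i dk / π i dk) * (y j dl / π j dl) * (π i dk * π j dl)
      = (∑ i, y i dk) * (∑ j, y j dl) - ∑ i, y i dk * y i dl := by
    have : ∀ i : Fin N, ∑ j ∈ Finset.univ.erase i,
        (y i dk / π i dk) * (y j dl / π j dl) * (π i dk * π j dl)
        = (∑ j, y i dk * y j dl) - y i dk * y i dl := by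
      intro i
      rw [← Finset.add_sum_erase Finset.univ (fun j => y i dk * y j dl) (Finset.mem_univ i)]
      simp only [hterm]
      ring
    rw [Finset.sum_congr rfl (fun i _ => this i), Finset.sum_sub_distrib]
    congr 1
    rw [Finset.sum_mul]
    exact Finset.sum_congr rfl fun i _ => (Finset.mul_sum _ _ _).symm
  rw [hcross]
  ring
end

section
/- The correction term Â₂(d_k) = Σ_i Σ_{j≠i: π_{ij}(d_k)=0} [I(D_i=d_k)y_i(d_k)²/(2π_i(d_k)) + I(D_j=d_k)y_j(d_k)²/(2π_j(d_k))] satisfies E[Â₂(d_k)] ≥ Σ_i Σ_{j≠i: π_{ij}(d_k)=0} y_i(d_k)y_j(d_k), so adding Â₂(d_k) to the Horvitz-Thompson variance estimator yields a nonnegatively biased (conservative) estimator of Var(Ŷ(d_k)). -/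
open Finset

lemma var_eq_aux {Ωs : Type*} [Fintype Ωs] (p : Ωs → ℝ) (hp1 : ∑ ω, p ω = 1) (X : Ωs → ℝ) :
    Var' p X = expect p (fun ω => X ω ^ 2) - (expect p X) ^ 2 := by
  simp only [Var', _root_.expect]
  have h : ∀ ω, p ω * (X ω - ∑ ω', p ω' * X ω') ^ 2
      = p ω * X ω ^ 2 - 2 * (∑ ω', p ω' * X ω') * (p ω * X ω)
        + (∑ ω', p ω' * X ω') ^ 2 * p ω := fun ω => by ring
  rw [Finset.sum_congr rfl fun ω _ => h ω]
  rw [Finset.sum_add_distrib, Finset.sum_sub_distrib, ← Finset.mul_sum, ← Finset.mul_sum, hp1]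
  ring

open scoped Classical in
/-- The Young's-inequality correction term has expectation at least the omitted bias term,
so adding it to the HT variance estimator yields a conservative variance estimator. -/
theorem stmt6 {Ωs : Type*} [Fintype Ωs] (p : Ωs → ℝ)
    (hp0 : ∀ ω, 0 ≤ p ω) (hp1 : ∑ ω, p ω = 1)
    {N : ℕ} {Δ : Type*} [DecidableEq Δ]
    (D : Fin N → Ωs → Δ) (y : Fin N → Δ → ℝ)
    (π : Fin N → Δ → ℝ)
    (hπ : ∀ i d, π i d = ∑ ω, p ω * (if D i ω = d then (1:ℝ) else 0))
    (hπ01 : ∀ i d, 0 < π i d ∧ π i d < 1)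
    (dk : Δ) (πij : Fin N → Fin N → ℝ)
    (hπij : ∀ i j, πij i j = ∑ ω, p ω *
      ((if D i ω = dk then (1:ℝ) else 0) * (if D j ω = dk then (1:ℝ) else 0)))
    (A2 : Ωs → ℝ)
    (hA2 : ∀ ω, A2 ω = ∑ i, ∑ j ∈ (Finset.univ.erase i).filter (fun j => πij i j = 0),
        ((if D i ω = dk then (1:ℝ) else 0) * y i dk ^ 2 / (2 * π i dk)
          + (if D j ω = dk then (1:ℝ) else 0) * y j dk ^ 2 / (2 * π j dk))) :
    expect p A2
        ≥ ∑ i, ∑ j ∈ (Finset.univ.erase i).filter (fun j => πij i j = 0), y i dk * y j dk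
    ∧ expect p (fun ω =>
        (∑ i, (if D i ω = dk then (1:ℝ) else 0) * (1 - π i dk) * (y i dk / π i dk) ^ 2
          + ∑ i, ∑ j ∈ (Finset.univ.erase i).filter (fun j => 0 < πij i j),
              (if D i ω = dk then (1:ℝ) else 0) * (if D j ω = dk then (1:ℝ) else 0)
                * ((πij i j - π i dk * π j dk) / πij i j)
                * (y i dk / π i dk) * (y j dk / π j dk))
          + A2 ω)
      ≥ Var' p (fun ω => ∑ i, (if D i ω = dk then (1:ℝ) else 0) * y i dk / π i dk) := by
  classical
  have hπpos : ∀ i, (0:ℝ) < π i dk := fun i => (hπ01 i dk).1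
  have hπne : ∀ i, π i dk ≠ 0 := fun i => (hπpos i).ne'
  have hπijnn : ∀ i j, 0 ≤ πij i j := by
    intro i j; rw [hπij]
    refine Finset.sum_nonneg fun ω _ => ?_
    have h0 := hp0 ω
    positivity
  have hπii : ∀ i, πij i i = π i dk := by
    intro i; rw [hπij, hπ i dk]
    refine Finset.sum_congr rfl fun ω _ => ?_
    by_cases h : D i ω = dk <;> simp [h]
  have hsum1 : ∀ (i : Fin N) (c : ℝ),
      ∑ ω, p ω * ((if D i ω = dk then (1:ℝ) else 0) * c) = π i dk * c := by
    intro i c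
    rw [hπ i dk, Finset.sum_mul]
    exact Finset.sum_congr rfl fun ω _ => by ring
  have hsum2 : ∀ (i j : Fin N) (c : ℝ),
      ∑ ω, p ω * ((if D i ω = dk then (1:ℝ) else 0) * (if D j ω = dk then (1:ℝ) else 0) * c)
        = πij i j * c := by
    intro i j c
    rw [hπij i j, Finset.sum_mul]
    exact Finset.sum_congr rfl fun ω _ => by ring
  -- Part 1: expectation of A2
  have hEA2 : expect p A2 = ∑ i, ∑ j ∈ (Finset.univ.erase i).filter (fun j => πij i j = 0),
      (y i dk ^ 2 / 2 + y j dk ^ 2 / 2) := by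
    simp only [_root_.expect, hA2, Finset.mul_sum]
    rw [Finset.sum_comm]
    refine Finset.sum_congr rfl fun i _ => ?_
    rw [Finset.sum_comm]
    refine Finset.sum_congr rfl fun j _ => ?_
    have e1 : ∀ ω, p ω * ((if D i ω = dk then (1:ℝ) else 0) * y i dk ^ 2 / (2 * π i dk)
        + (if D j ω = dk then (1:ℝ) else 0) * y j dk ^ 2 / (2 * π j dk))
        = p ω * ((if D i ω = dk then (1:ℝ) else 0) * (y i dk ^ 2 / (2 * π i dk)))
          + p ω * ((if D j ω = dk then (1:ℝ) else 0) * (y j dk ^ 2 / (2 * π j dk))) :=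
      fun ω => by ring
    rw [Finset.sum_congr rfl fun ω _ => e1 ω, Finset.sum_add_distrib, hsum1, hsum1]
    field_simp [hπne i, hπne j]
  have h1 : expect p A2
      ≥ ∑ i, ∑ j ∈ (Finset.univ.erase i).filter (fun j => πij i j = 0), y i dk * y j dk := by
    rw [hEA2, ge_iff_le]
    refine Finset.sum_le_sum fun i _ => Finset.sum_le_sum fun j _ => ?_
    nlinarith [sq_nonneg (y i dk - y j dk)]
  refine ⟨h1, ?_⟩
  -- Part 2
  set X : Ωs → ℝ := fun ω => ∑ i, (if D i ω = dk then (1:ℝ) else 0) * y i dk / π i dk with hX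
  have hEX : expect p X = ∑ i, y i dk := by
    simp only [_root_.expect, hX, Finset.mul_sum]
    rw [Finset.sum_comm]
    refine Finset.sum_congr rfl fun i _ => ?_
    have e : ∀ ω, p ω * ((if D i ω = dk then (1:ℝ) else 0) * y i dk / π i dk)
        = p ω * ((if D i ω = dk then (1:ℝ) else 0) * (y i dk / π i dk)) := fun ω => by ring
    rw [Finset.sum_congr rfl fun ω _ => e ω, hsum1]
    rw [mul_comm]
    exact div_mul_cancel₀ _ (hπne i)
  have hEX2 : expect p (fun ω => X ω ^ 2)
      = ∑ i, ∑ j, πij i j * ((y i dk / π i dk) * (y j dk / π j dk)) := by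
    simp only [_root_.expect, hX]
    have e : ∀ ω : Ωs, p ω * (∑ i, (if D i ω = dk then (1:ℝ) else 0) * y i dk / π i dk) ^ 2
        = ∑ i, ∑ j, p ω * ((if D i ω = dk then (1:ℝ) else 0) * (if D j ω = dk then (1:ℝ) else 0)
            * ((y i dk / π i dk) * (y j dk / π j dk))) := by
      intro ω
      rw [sq, Finset.sum_mul_sum, Finset.mul_sum]
      refine Finset.sum_congr rfl fun i _ => ?_
      rw [Finset.mul_sum]
      refine Finset.sum_congr rfl fun j _ => ?_
      ring
    rw [Finset.sum_congr rfl fun ω _ => e ω, Finset.sum_comm]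
    refine Finset.sum_congr rfl fun i _ => ?_
    rw [Finset.sum_comm]
    exact Finset.sum_congr rfl fun j _ => hsum2 i j _
  have hVar : Var' p X = ∑ i, ∑ j, (πij i j - π i dk * π j dk)
      * ((y i dk / π i dk) * (y j dk / π j dk)) := by
    rw [var_eq_aux p hp1 X, hEX2, hEX]
    have hsq : (∑ i, y i dk) ^ 2
        = ∑ i, ∑ j, (π i dk * π j dk) * ((y i dk / π i dk) * (y j dk / π j dk)) := by
      rw [sq, Finset.sum_mul_sum]
      refine Finset.sum_congr rfl fun i _ => Finset.sum_congr rfl fun j _ => ?_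
      field_simp [hπne i, hπne j]
    rw [hsq, ← Finset.sum_sub_distrib]
    refine Finset.sum_congr rfl fun i _ => ?_
    rw [← Finset.sum_sub_distrib]
    exact Finset.sum_congr rfl fun j _ => by ring
  -- decompose the variance per i: diagonal + positive pairs + zero pairs
  have hVar' : Var' p X = ∑ i,
      ((π i dk * ((1 - π i dk) * (y i dk / π i dk) ^ 2))
        + (∑ j ∈ (Finset.univ.erase i).filter (fun j => 0 < πij i j),
            (πij i j - π i dk * π j dk) * ((y i dk / π i dk) * (y j dk / π j dk)))
        + ∑ j ∈ (Finset.univ.erase i).filter (fun j => πij i j = 0), -(y i dk * y j dk)) := by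
    rw [hVar]
    refine Finset.sum_congr rfl fun i _ => ?_
    rw [← Finset.add_sum_erase _ _ (Finset.mem_univ i)]
    rw [← Finset.sum_filter_add_sum_filter_not (Finset.univ.erase i) (fun j => 0 < πij i j),
      ← add_assoc]
    congr 1
    · congr 1
      rw [hπii i]; ring
    · have hfe : (Finset.univ.erase i).filter (fun j => ¬ 0 < πij i j)
          = (Finset.univ.erase i).filter (fun j => πij i j = 0) := by
        refine Finset.filter_congr fun j _ => ?_
        rw [not_lt]
        exact ⟨fun h => le_antisymm h (hπijnn i j), fun h => le_of_eq h⟩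
      rw [hfe]
      refine Finset.sum_congr rfl fun j hj => ?_
      have h0 : πij i j = 0 := (Finset.mem_filter.mp hj).2
      rw [h0]
      have hyi : π i dk * (y i dk / π i dk) = y i dk := by
        rw [mul_comm]; exact div_mul_cancel₀ _ (hπne i)
      have hyj : π j dk * (y j dk / π j dk) = y j dk := by
        rw [mul_comm]; exact div_mul_cancel₀ _ (hπne j)
      calc (0 - π i dk * π j dk) * (y i dk / π i dk * (y j dk / π j dk))
          = -((π i dk * (y i dk / π i dk)) * (π j dk * (y j dk / π j dk))) := by ring
        _ = -(y i dk * y j dk) := by rw [hyi, hyj]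
  -- expectation of the LHS estimator
  have hELHS : expect p (fun ω =>
        (∑ i, (if D i ω = dk then (1:ℝ) else 0) * (1 - π i dk) * (y i dk / π i dk) ^ 2
          + ∑ i, ∑ j ∈ (Finset.univ.erase i).filter (fun j => 0 < πij i j),
              (if D i ω = dk then (1:ℝ) else 0) * (if D j ω = dk then (1:ℝ) else 0)
                * ((πij i j - π i dk * π j dk) / πij i j)
                * (y i dk / π i dk) * (y j dk / π j dk))
          + A2 ω)
      = (∑ i, π i dk * ((1 - π i dk) * (y i dk / π i dk) ^ 2))
        + (∑ i, ∑ j ∈ (Finset.univ.erase i).filter (fun j => 0 < πij i j),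
            (πij i j - π i dk * π j dk) * ((y i dk / π i dk) * (y j dk / π j dk)))
        + expect p A2 := by
    simp only [_root_.expect]
    have e : ∀ ω : Ωs, p ω * ((∑ i, (if D i ω = dk then (1:ℝ) else 0) * (1 - π i dk) * (y i dk / π i dk) ^ 2
          + ∑ i, ∑ j ∈ (Finset.univ.erase i).filter (fun j => 0 < πij i j),
              (if D i ω = dk then (1:ℝ) else 0) * (if D j ω = dk then (1:ℝ) else 0)
                * ((πij i j - π i dk * π j dk) / πij i j)
                * (y i dk / π i dk) * (y j dk / π j dk))
          + A2 ω)
        = p ω * (∑ i, (if D i ω = dk then (1:ℝ) else 0) * (1 - π i dk) * (y i dk / π i dk) ^ 2)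
          + p ω * (∑ i, ∑ j ∈ (Finset.univ.erase i).filter (fun j => 0 < πij i j),
              (if D i ω = dk then (1:ℝ) else 0) * (if D j ω = dk then (1:ℝ) else 0)
                * ((πij i j - π i dk * π j dk) / πij i j)
                * (y i dk / π i dk) * (y j dk / π j dk))
          + p ω * A2 ω := fun ω => by ring
    rw [Finset.sum_congr rfl fun ω _ => e ω, Finset.sum_add_distrib, Finset.sum_add_distrib]
    congr 1
    congr 1
    · -- first term
      simp only [Finset.mul_sum]
      rw [Finset.sum_comm]
      refine Finset.sum_congr rfl fun i _ => ?_
      have e2 : ∀ ω, p ω * ((if D i ω = dk then (1:ℝ) else 0) * (1 - π i dk) * (y i dk / π i dk) ^ 2)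
          = p ω * ((if D i ω = dk then (1:ℝ) else 0) * ((1 - π i dk) * (y i dk / π i dk) ^ 2)) :=
        fun ω => by ring
      rw [Finset.sum_congr rfl fun ω _ => e2 ω, hsum1]
    · -- second term
      simp only [Finset.mul_sum]
      rw [Finset.sum_comm]
      refine Finset.sum_congr rfl fun i _ => ?_
      rw [Finset.sum_comm]
      refine Finset.sum_congr rfl fun j hj => ?_
      have hjpos : 0 < πij i j := (Finset.mem_filter.mp hj).2
      have hjne : πij i j ≠ 0 := hjpos.ne'
      have e3 : ∀ ω, p ω * ((if D i ω = dk then (1:ℝ) else 0) * (if D j ω = dk then (1:ℝ) else 0)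
            * ((πij i j - π i dk * π j dk) / πij i j) * (y i dk / π i dk) * (y j dk / π j dk))
          = p ω * ((if D i ω = dk then (1:ℝ) else 0) * (if D j ω = dk then (1:ℝ) else 0)
            * (((πij i j - π i dk * π j dk) / πij i j) * ((y i dk / π i dk) * (y j dk / π j dk)))) :=
        fun ω => by ring
      rw [Finset.sum_congr rfl fun ω _ => e3 ω, hsum2]
      calc πij i j * ((πij i j - π i dk * π j dk) / πij i j * (y i dk / π i dk * (y j dk / π j dk)))
          = (πij i j - π i dk * π j dk) / πij i j * πij i j
              * (y i dk / π i dk * (y j dk / π j dk)) := by ring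
        _ = (πij i j - π i dk * π j dk) * (y i dk / π i dk * (y j dk / π j dk)) := by
            rw [div_mul_cancel₀ _ hjne]
  rw [ge_iff_le, hELHS, hVar', hEA2, ← Finset.sum_add_distrib, ← Finset.sum_add_distrib]
  refine Finset.sum_le_sum fun i _ => ?_
  refine add_le_add (le_refl _) ?_
  refine Finset.sum_le_sum fun j _ => ?_
  nlinarith [sq_nonneg (y i dk + y j dk)]
end

section
/- The covariance estimator ĈovA for Cov(Ŷ(d_k), Ŷ(d_l)), formed by the Horvitz-Thompson term over pairs with π_{ij}(d_k,d_l) > 0 minus the Young's-inequality correction term over pairs with π_{ij}(d_k,d_l) = 0 (including i = j), satisfies E[ĈovA] ≤ Cov(Ŷ(d_k), Ŷ(d_l)); consequently the combined variance estimator (1/N²)[V̂(d_k) + Â₂(d_k) + V̂(d_l) + Â₂(d_l) − 2ĈovA] is nonnegatively biased for Var(τ̂(d_k,d_l)). -/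
/-!
Horvitz–Thompson weighting makes every term of the estimators that involves a pair with positive
joint probability unbiased for the matching term `aᵢ bⱼ (πᵢⱼ - πᵢ πⱼ)` of the bilinear expansion
of the covariance (with `aᵢ = yᵢ / πᵢ`). The bias therefore comes only from pairs with
`πᵢⱼ = 0`, where that term is `-yᵢ yⱼ`; Young's inequality `|yᵢ yⱼ| ≤ (yᵢ² + yⱼ²) / 2` bounds it
from below by minus the expected correction term of `ĈovA` and from above by that of `Â₂`.
The variance of `τ̂` is `(Var Ŷ(d_k) + Var Ŷ(d_l) - 2 Cov) / N²`, so the two bounds combine.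
-/

open Finset

section Expectation

variable {Ωs : Type*} [Fintype Ωs] (p : Ωs → ℝ)

theorem expect_add (X Y : Ωs → ℝ) :
    expect p (fun ω => X ω + Y ω) = expect p X + expect p Y := by
  simp only [_root_.expect, mul_add, sum_add_distrib]

theorem expect_sub (X Y : Ωs → ℝ) :
    expect p (fun ω => X ω - Y ω) = expect p X - expect p Y := by
  simp only [_root_.expect, mul_sub, sum_sub_distrib]

theorem expect_const_mul (c : ℝ) (X : Ωs → ℝ) :
    expect p (fun ω => c * X ω) = c * expect p X := by
  simp only [_root_.expect, mul_sum, mul_left_comm]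

theorem expect_mul_const (X : Ωs → ℝ) (c : ℝ) :
    expect p (fun ω => X ω * c) = expect p X * c := by
  simp only [_root_.expect, sum_mul, mul_assoc]

theorem expect_sum {κ : Type*} (s : Finset κ) (X : κ → Ωs → ℝ) :
    expect p (fun ω => ∑ k ∈ s, X k ω) = ∑ k ∈ s, expect p (X k) := by
  simp only [_root_.expect, mul_sum]
  exact sum_comm

theorem expect_sum_const_mul {κ : Type*} (s : Finset κ) (a : κ → ℝ) (X : κ → Ωs → ℝ) :
    expect p (fun ω => ∑ k ∈ s, a k * X k ω) = ∑ k ∈ s, a k * expect p (X k) := by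
  simp only [expect_sum, expect_const_mul]

variable {p} in
theorem expect_nonneg (hp0 : ∀ ω, 0 ≤ p ω) {X : Ωs → ℝ} (hX : ∀ ω, 0 ≤ X ω) :
    0 ≤ expect p X :=
  sum_nonneg fun ω _ => mul_nonneg (hp0 ω) (hX ω)

variable {p} in
theorem expect_div_mul {X : Ωs → ℝ} {q : ℝ} (hX : expect p X = q) (hq : q ≠ 0) (c : ℝ) :
    expect p (fun ω => X ω / q * c) = c := by
  calc expect p (fun ω => X ω / q * c) = expect p (fun ω => X ω * (c / q)) := by
        simp only [div_mul_eq_mul_div, mul_div_assoc]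
    _ = c := by rw [expect_mul_const, hX, mul_div_cancel₀ c hq]

theorem var'_eq_cov' (X : Ωs → ℝ) : Var' p X = Cov' p X X := by
  simp only [Var', Cov', sq]

theorem cov'_of_sum_eq_one (hp1 : ∑ ω, p ω = 1) (X Y : Ωs → ℝ) :
    Cov' p X Y = expect p (fun ω => X ω * Y ω) - expect p X * expect p Y := by
  have hconst : expect p (fun _ => expect p X * expect p Y) = expect p X * expect p Y := by
    rw [_root_.expect, ← sum_mul, hp1, one_mul]
  have hexpand : (fun ω => (X ω - expect p X) * (Y ω - expect p Y)) = fun ω =>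
      X ω * Y ω - expect p X * Y ω - expect p Y * X ω + expect p X * expect p Y := by
    funext ω; ring
  rw [Cov', hexpand, expect_add, expect_sub, expect_sub, expect_const_mul, expect_const_mul,
    hconst]
  ring

theorem cov'_sum_mul_sum {ι κ : Type*} (s : Finset ι) (t : Finset κ) (a : ι → ℝ) (b : κ → ℝ)
    (X : ι → Ωs → ℝ) (Y : κ → Ωs → ℝ) :
    Cov' p (fun ω => ∑ i ∈ s, a i * X i ω) (fun ω => ∑ j ∈ t, b j * Y j ω)
      = ∑ i ∈ s, ∑ j ∈ t, a i * b j * Cov' p (X i) (Y j) := by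
  have hexpand : (fun ω => (∑ i ∈ s, a i * X i ω - ∑ i ∈ s, a i * expect p (X i))
        * (∑ j ∈ t, b j * Y j ω - ∑ j ∈ t, b j * expect p (Y j))) = fun ω =>
      ∑ i ∈ s, ∑ j ∈ t, a i * b j * ((X i ω - expect p (X i)) * (Y j ω - expect p (Y j))) := by
    funext ω
    rw [← sum_sub_distrib, ← sum_sub_distrib, sum_mul_sum]
    exact sum_congr rfl fun i _ => sum_congr rfl fun j _ => by ring
  rw [Cov', expect_sum_const_mul, expect_sum_const_mul, hexpand]
  simp only [expect_sum, expect_const_mul, Cov']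

theorem var'_const_mul_sub (c : ℝ) (X Y : Ωs → ℝ) :
    Var' p (fun ω => c * (X ω - Y ω))
      = c ^ 2 * (Var' p X + Var' p Y - 2 * Cov' p X Y) := by
  have hmean : expect p (fun ω => c * (X ω - Y ω)) = c * (expect p X - expect p Y) := by
    rw [expect_const_mul, expect_sub]
  have hexpand : (fun ω => (c * (X ω - Y ω) - c * (expect p X - expect p Y)) ^ 2) = fun ω =>
      c ^ 2 * ((X ω - expect p X) ^ 2 + (Y ω - expect p Y) ^ 2
        - 2 * ((X ω - expect p X) * (Y ω - expect p Y))) := by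
    funext ω; ring
  rw [Var', hmean, hexpand, expect_const_mul, expect_sub, expect_add, expect_const_mul]
  rfl

end Expectation

theorem sum_eq_sum_filter_eq_zero_add_sum_filter_pos {κ : Type*} (s : Finset κ) {q : κ → ℝ}
    (hq : ∀ k ∈ s, 0 ≤ q k) (f : κ → ℝ) :
    ∑ k ∈ s, f k = ∑ k ∈ s with q k = 0, f k + ∑ k ∈ s with 0 < q k, f k := by
  rw [← sum_filter_add_sum_filter_not s (fun k => q k = 0)]
  congr 1
  exact sum_congr (filter_congr fun k hk => ⟨(hq k hk).lt_of_ne', ne_of_gt⟩) fun _ _ => rfl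

theorem div_mul_div_mul_zero_sub_mul {a b u v : ℝ} (hu : u ≠ 0) (hv : v ≠ 0) :
    a / u * (b / v) * (0 - u * v) = -(a * b) := by
  field_simp
  ring

section HorvitzThompson

variable {Ωs : Type*} [Fintype Ωs] {p : Ωs → ℝ} {ι : Type*} [Fintype ι]
  {X Z : ι → Ωs → ℝ} {π₁ π₂ : ι → ℝ} {πc : ι → ι → ℝ}

theorem cov'_eq_sum_sum_of_moments (hp1 : ∑ ω, p ω = 1)
    (hX : ∀ i, expect p (X i) = π₁ i) (hZ : ∀ j, expect p (Z j) = π₂ j)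
    (hXZ : ∀ i j, expect p (fun ω => X i ω * Z j ω) = πc i j)
    {y₁ y₂ : ι → ℝ} {Y₁ Y₂ : Ωs → ℝ}
    (hY₁ : ∀ ω, Y₁ ω = ∑ i, X i ω * y₁ i / π₁ i) (hY₂ : ∀ ω, Y₂ ω = ∑ j, Z j ω * y₂ j / π₂ j) :
    Cov' p Y₁ Y₂ = ∑ i, ∑ j, y₁ i / π₁ i * (y₂ j / π₂ j) * (πc i j - π₁ i * π₂ j) := by
  have hY₁' : Y₁ = fun ω => ∑ i, y₁ i / π₁ i * X i ω :=
    funext fun ω => by rw [hY₁]; exact sum_congr rfl fun i _ => by ring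
  have hY₂' : Y₂ = fun ω => ∑ j, y₂ j / π₂ j * Z j ω :=
    funext fun ω => by rw [hY₂]; exact sum_congr rfl fun j _ => by ring
  rw [hY₁', hY₂', cov'_sum_mul_sum]
  simp only [cov'_of_sum_eq_one p hp1, hX, hZ, hXZ]

theorem expect_sum_sum_div_mul_eq (hXZ : ∀ i j, expect p (fun ω => X i ω * Z j ω) = πc i j)
    (T : ι → Finset ι) (hT : ∀ i, ∀ j ∈ T i, πc i j ≠ 0) (t : ι → ι → ℝ) :
    expect p (fun ω => ∑ i, ∑ j ∈ T i, X i ω * Z j ω / πc i j * t i j)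
      = ∑ i, ∑ j ∈ T i, t i j := by
  simp only [expect_sum]
  exact sum_congr rfl fun i _ => sum_congr rfl fun j hj => expect_div_mul (hXZ i j) (hT i j hj) _

theorem expect_sum_sum_young (hX : ∀ i, expect p (X i) = π₁ i)
    (hZ : ∀ j, expect p (Z j) = π₂ j) (hπ₁ : ∀ i, π₁ i ≠ 0) (hπ₂ : ∀ j, π₂ j ≠ 0)
    (T : ι → Finset ι) (y₁ y₂ : ι → ℝ) :
    expect p (fun ω => ∑ i, ∑ j ∈ T i,
        (X i ω * y₁ i ^ 2 / (2 * π₁ i) + Z j ω * y₂ j ^ 2 / (2 * π₂ j)))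
      = ∑ i, ∑ j ∈ T i, (y₁ i ^ 2 / 2 + y₂ j ^ 2 / 2) := by
  simp only [expect_sum]
  refine sum_congr rfl fun i _ => sum_congr rfl fun j _ => ?_
  have hform : ∀ (W : Ωs → ℝ) (y q : ℝ), (fun ω => W ω * y ^ 2 / (2 * q)) =
      fun ω => W ω / q * (y ^ 2 / 2) := fun W y q => funext fun ω => by ring
  rw [expect_add, hform, hform, expect_div_mul (hX i) (hπ₁ i), expect_div_mul (hZ j) (hπ₂ j)]

theorem expect_covEstimator_le_cov' [DecidableEq ι] (hp1 : ∑ ω, p ω = 1)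
    (hX : ∀ i, expect p (X i) = π₁ i) (hZ : ∀ j, expect p (Z j) = π₂ j)
    (hXZ : ∀ i j, expect p (fun ω => X i ω * Z j ω) = πc i j)
    (hπ₁ : ∀ i, π₁ i ≠ 0) (hπ₂ : ∀ j, π₂ j ≠ 0)
    (hπc_nonneg : ∀ i j, 0 ≤ πc i j) (hπc_self : ∀ i, πc i i = 0)
    {y₁ y₂ : ι → ℝ} {Y₁ Y₂ C : Ωs → ℝ}
    (hY₁ : ∀ ω, Y₁ ω = ∑ i, X i ω * y₁ i / π₁ i) (hY₂ : ∀ ω, Y₂ ω = ∑ j, Z j ω * y₂ j / π₂ j)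
    (hC : ∀ ω, C ω =
      (∑ i, ∑ j ∈ (univ.erase i).filter (fun j => 0 < πc i j),
        (X i ω * Z j ω / πc i j) * (y₁ i / π₁ i) * (y₂ j / π₂ j) * (πc i j - π₁ i * π₂ j))
      - ∑ i, ∑ j ∈ univ.filter (fun j => πc i j = 0),
          (X i ω * y₁ i ^ 2 / (2 * π₁ i) + Z j ω * y₂ j ^ 2 / (2 * π₂ j))) :
    expect p C ≤ Cov' p Y₁ Y₂ := by
  set t : ι → ι → ℝ := fun i j => y₁ i / π₁ i * (y₂ j / π₂ j) * (πc i j - π₁ i * π₂ j)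
  have hEC : expect p C = ∑ i, ∑ j ∈ univ.filter (fun j => 0 < πc i j), t i j
      - ∑ i, ∑ j ∈ univ.filter (fun j => πc i j = 0), (y₁ i ^ 2 / 2 + y₂ j ^ 2 / 2) := by
    have hpos : ∀ i, (univ.erase i).filter (fun j => 0 < πc i j)
        = univ.filter (fun j => 0 < πc i j) := fun i => by
      ext j
      simp only [mem_filter, mem_erase, mem_univ, and_true, true_and, and_iff_right_iff_imp]
      rintro hj rfl
      exact (hπc_self j).not_gt hj
    have hC' : C = fun ω => (∑ i, ∑ j ∈ univ.filter (fun j => 0 < πc i j),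
          X i ω * Z j ω / πc i j * t i j)
        - ∑ i, ∑ j ∈ univ.filter (fun j => πc i j = 0),
          (X i ω * y₁ i ^ 2 / (2 * π₁ i) + Z j ω * y₂ j ^ 2 / (2 * π₂ j)) := by
      funext ω
      rw [hC]
      congr 1
      exact sum_congr rfl fun i _ => by rw [hpos]; exact sum_congr rfl fun j _ => by ring
    rw [hC', expect_sub, expect_sum_sum_div_mul_eq hXZ _ (fun i j hj => (mem_filter.1 hj).2.ne'),
      expect_sum_sum_young hX hZ hπ₁ hπ₂]
  have hyoung : ∀ i, ∀ j ∈ univ.filter (fun j => πc i j = 0),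
      -(y₁ i ^ 2 / 2 + y₂ j ^ 2 / 2) ≤ t i j := fun i j hj => by
    simp only [t, (mem_filter.1 hj).2, div_mul_div_mul_zero_sub_mul (hπ₁ i) (hπ₂ j)]
    nlinarith [sq_nonneg (y₁ i - y₂ j)]
  rw [hEC, cov'_eq_sum_sum_of_moments hp1 hX hZ hXZ hY₁ hY₂, ← sum_sub_distrib]
  refine sum_le_sum fun i _ => ?_
  rw [sum_eq_sum_filter_eq_zero_add_sum_filter_pos univ (fun j _ => hπc_nonneg i j)]
  have hzero := sum_le_sum (hyoung i)
  rw [sum_neg_distrib] at hzero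
  linarith

theorem var'_le_expect_varEstimator_add [DecidableEq ι] (hp1 : ∑ ω, p ω = 1)
    (hX : ∀ i, expect p (X i) = π₁ i)
    (hXX : ∀ i j, expect p (fun ω => X i ω * X j ω) = πc i j)
    (hπ₁ : ∀ i, π₁ i ≠ 0) (hπc_nonneg : ∀ i j, 0 ≤ πc i j) (hπc_self : ∀ i, πc i i = π₁ i)
    {y : ι → ℝ} {Y V A : Ωs → ℝ}
    (hY : ∀ ω, Y ω = ∑ i, X i ω * y i / π₁ i)
    (hV : ∀ ω, V ω =
      ∑ i, X i ω * (1 - π₁ i) * (y i / π₁ i) ^ 2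
      + ∑ i, ∑ j ∈ (univ.erase i).filter (fun j => 0 < πc i j),
          X i ω * X j ω * ((πc i j - π₁ i * π₁ j) / πc i j) * (y i / π₁ i) * (y j / π₁ j))
    (hA : ∀ ω, A ω = ∑ i, ∑ j ∈ (univ.erase i).filter (fun j => πc i j = 0),
        (X i ω * y i ^ 2 / (2 * π₁ i) + X j ω * y j ^ 2 / (2 * π₁ j))) :
    Var' p Y ≤ expect p V + expect p A := by
  set t : ι → ι → ℝ := fun i j => y i / π₁ i * (y j / π₁ j) * (πc i j - π₁ i * π₁ j)
  have hEV : expect p V = ∑ i, t i i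
      + ∑ i, ∑ j ∈ (univ.erase i).filter (fun j => 0 < πc i j), t i j := by
    have hV' : V = fun ω => ∑ i, X i ω * ((1 - π₁ i) * (y i / π₁ i) ^ 2)
        + ∑ i, ∑ j ∈ (univ.erase i).filter (fun j => 0 < πc i j),
          X i ω * X j ω / πc i j * t i j := by
      funext ω
      rw [hV]
      congr 1
      · exact sum_congr rfl fun i _ => by ring
      · exact sum_congr rfl fun i _ => sum_congr rfl fun j _ => by ring
    rw [hV', expect_add, expect_sum_sum_div_mul_eq hXX _ (fun i j hj => (mem_filter.1 hj).2.ne')]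
    simp only [expect_sum, expect_mul_const, hX, t, hπc_self]
    congr 1
    exact sum_congr rfl fun i _ => by ring
  have hyoung : ∀ i, ∀ j ∈ (univ.erase i).filter (fun j => πc i j = 0),
      t i j ≤ y i ^ 2 / 2 + y j ^ 2 / 2 := fun i j hj => by
    simp only [t, (mem_filter.1 hj).2, div_mul_div_mul_zero_sub_mul (hπ₁ i) (hπ₁ j)]
    nlinarith [sq_nonneg (y i + y j)]
  rw [var'_eq_cov', cov'_eq_sum_sum_of_moments hp1 hX hX hXX hY hY, hEV, show A = _ from funext hA,
    expect_sum_sum_young hX hX hπ₁ hπ₁, ← sum_add_distrib, ← sum_add_distrib]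
  refine sum_le_sum fun i _ => ?_
  rw [← add_sum_erase _ _ (mem_univ i),
    sum_eq_sum_filter_eq_zero_add_sum_filter_pos _ (fun j _ => hπc_nonneg i j)]
  linarith [sum_le_sum (hyoung i)]

end HorvitzThompson

section Indicators

variable {Ωs : Type*} [Fintype Ωs] {p : Ωs → ℝ} {α Δ : Type*} [DecidableEq Δ] (D : α → Ωs → Δ)

theorem expect_ite_mul_ite_self (i : α) (d : Δ) :
    expect p (fun ω => (if D i ω = d then (1:ℝ) else 0) * (if D i ω = d then (1:ℝ) else 0))
      = expect p (fun ω => if D i ω = d then (1:ℝ) else 0) := by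
  simp only [ite_zero_mul_ite_zero, and_self, mul_one]

theorem expect_ite_mul_ite_of_ne (i : α) {d d' : Δ} (h : d ≠ d') :
    expect p (fun ω => (if D i ω = d then (1:ℝ) else 0) * (if D i ω = d' then (1:ℝ) else 0))
      = 0 := by
  refine sum_eq_zero fun ω _ => ?_
  have hdisjoint : ¬(D i ω = d ∧ D i ω = d') := fun hh => h (hh.1.symm.trans hh.2)
  simp only [ite_zero_mul_ite_zero, if_neg hdisjoint, mul_zero]

end Indicators

open scoped Classical in
theorem stmt8_general {Ωs : Type*} [Fintype Ωs] (p : Ωs → ℝ)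
    (hp0 : ∀ ω, 0 ≤ p ω) (hp1 : ∑ ω, p ω = 1)
    {N : ℕ} {Δ : Type*} [DecidableEq Δ]
    (D : Fin N → Ωs → Δ) (y : Fin N → Δ → ℝ)
    (π : Fin N → Δ → ℝ)
    (hπ : ∀ i d, π i d = ∑ ω, p ω * (if D i ω = d then (1:ℝ) else 0))
    (hπ01 : ∀ i d, 0 < π i d ∧ π i d < 1)
    (dk dl : Δ) (hkl : dk ≠ dl)
    -- joint probabilities within exposure dk, within dl, and across (dk, dl)
    (πijk πijl πc : Fin N → Fin N → ℝ)
    (hπijk : ∀ i j, πijk i j = ∑ ω, p ω *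
      ((if D i ω = dk then (1:ℝ) else 0) * (if D j ω = dk then (1:ℝ) else 0)))
    (hπijl : ∀ i j, πijl i j = ∑ ω, p ω *
      ((if D i ω = dl then (1:ℝ) else 0) * (if D j ω = dl then (1:ℝ) else 0)))
    (hπc : ∀ i j, πc i j = ∑ ω, p ω *
      ((if D i ω = dk then (1:ℝ) else 0) * (if D j ω = dl then (1:ℝ) else 0)))
    -- HT total estimators
    (Yk Yl : Ωs → ℝ)
    (hYk : ∀ ω, Yk ω = ∑ i, (if D i ω = dk then (1:ℝ) else 0) * y i dk / π i dk)
    (hYl : ∀ ω, Yl ω = ∑ i, (if D i ω = dl then (1:ℝ) else 0) * y i dl / π i dl)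
    -- covariance estimator with Young's-inequality correction
    (CovA : Ωs → ℝ)
    (hCovA : ∀ ω, CovA ω =
      (∑ i, ∑ j ∈ (Finset.univ.erase i).filter (fun j => 0 < πc i j),
        ((if D i ω = dk then (1:ℝ) else 0) * (if D j ω = dl then (1:ℝ) else 0) / πc i j)
          * (y i dk / π i dk) * (y j dl / π j dl) * (πc i j - π i dk * π j dl))
      - ∑ i, ∑ j ∈ Finset.univ.filter (fun j => πc i j = 0),
          ((if D i ω = dk then (1:ℝ) else 0) * y i dk ^ 2 / (2 * π i dk)
            + (if D j ω = dl then (1:ℝ) else 0) * y j dl ^ 2 / (2 * π j dl)))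
    -- HT variance estimators and their correction terms for dk and dl
    (Vk Vl A2k A2l : Ωs → ℝ)
    (hVk : ∀ ω, Vk ω =
      ∑ i, (if D i ω = dk then (1:ℝ) else 0) * (1 - π i dk) * (y i dk / π i dk) ^ 2
      + ∑ i, ∑ j ∈ (Finset.univ.erase i).filter (fun j => 0 < πijk i j),
          (if D i ω = dk then (1:ℝ) else 0) * (if D j ω = dk then (1:ℝ) else 0)
            * ((πijk i j - π i dk * π j dk) / πijk i j)
            * (y i dk / π i dk) * (y j dk / π j dk))
    (hVl : ∀ ω, Vl ω =
      ∑ i, (if D i ω = dl then (1:ℝ) else 0) * (1 - π i dl) * (y i dl / π i dl) ^ 2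
      + ∑ i, ∑ j ∈ (Finset.univ.erase i).filter (fun j => 0 < πijl i j),
          (if D i ω = dl then (1:ℝ) else 0) * (if D j ω = dl then (1:ℝ) else 0)
            * ((πijl i j - π i dl * π j dl) / πijl i j)
            * (y i dl / π i dl) * (y j dl / π j dl))
    (hA2k : ∀ ω, A2k ω = ∑ i, ∑ j ∈ (Finset.univ.erase i).filter (fun j => πijk i j = 0),
        ((if D i ω = dk then (1:ℝ) else 0) * y i dk ^ 2 / (2 * π i dk)
          + (if D j ω = dk then (1:ℝ) else 0) * y j dk ^ 2 / (2 * π j dk)))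
    (hA2l : ∀ ω, A2l ω = ∑ i, ∑ j ∈ (Finset.univ.erase i).filter (fun j => πijl i j = 0),
        ((if D i ω = dl then (1:ℝ) else 0) * y i dl ^ 2 / (2 * π i dl)
          + (if D j ω = dl then (1:ℝ) else 0) * y j dl ^ 2 / (2 * π j dl))) :
    expect p CovA ≤ Cov' p Yk Yl
    ∧ expect p (fun ω => (1 / (N : ℝ) ^ 2)
          * (Vk ω + A2k ω + Vl ω + A2l ω - 2 * CovA ω))
        ≥ Var' p (fun ω => (1 / (N : ℝ)) * (Yk ω - Yl ω)) := by
  have hπk : ∀ i, π i dk ≠ 0 := fun i => (hπ01 i dk).1.ne'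
  have hπl : ∀ i, π i dl ≠ 0 := fun i => (hπ01 i dl).1.ne'
  have hcov : expect p CovA ≤ Cov' p Yk Yl :=
    expect_covEstimator_le_cov' (X := fun i ω => if D i ω = dk then 1 else 0)
      (Z := fun j ω => if D j ω = dl then 1 else 0) hp1
      (fun i => (hπ i dk).symm) (fun j => (hπ j dl).symm) (fun i j => (hπc i j).symm) hπk hπl
      (fun i j => hπc i j ▸ expect_nonneg hp0 fun _ => by positivity)
      (fun i => (hπc i i).trans (expect_ite_mul_ite_of_ne D i hkl)) hYk hYl hCovA
  have hvark : Var' p Yk ≤ expect p Vk + expect p A2k :=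
    var'_le_expect_varEstimator_add (X := fun i ω => if D i ω = dk then 1 else 0) hp1
      (fun i => (hπ i dk).symm) (fun i j => (hπijk i j).symm) hπk
      (fun i j => hπijk i j ▸ expect_nonneg hp0 fun _ => by positivity)
      (fun i => (hπijk i i).trans ((expect_ite_mul_ite_self D i dk).trans (hπ i dk).symm))
      hYk hVk hA2k
  have hvarl : Var' p Yl ≤ expect p Vl + expect p A2l :=
    var'_le_expect_varEstimator_add (X := fun i ω => if D i ω = dl then 1 else 0) hp1
      (fun i => (hπ i dl).symm) (fun i j => (hπijl i j).symm) hπl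
      (fun i j => hπijl i j ▸ expect_nonneg hp0 fun _ => by positivity)
      (fun i => (hπijl i i).trans ((expect_ite_mul_ite_self D i dl).trans (hπ i dl).symm))
      hYl hVl hA2l
  refine ⟨hcov, ?_⟩
  rw [ge_iff_le, var'_const_mul_sub, expect_const_mul, expect_sub, expect_add, expect_add,
    expect_add, expect_const_mul, one_div_pow]
  exact mul_le_mul_of_nonneg_left (by linarith) (by positivity)

open scoped Classical in
/-- The covariance estimator is nonpositively biased for the covariance of the HT totals,
and consequently the combined variance estimator is nonnegatively biased for the variance
of the difference-in-means estimator. -/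
theorem stmt8 {Ωs : Type*} [Fintype Ωs] (p : Ωs → ℝ)
    (hp0 : ∀ ω, 0 ≤ p ω) (hp1 : ∑ ω, p ω = 1)
    {N : ℕ} (hN : 0 < N) {Δ : Type*} [DecidableEq Δ]
    (D : Fin N → Ωs → Δ) (y : Fin N → Δ → ℝ)
    (π : Fin N → Δ → ℝ)
    (hπ : ∀ i d, π i d = ∑ ω, p ω * (if D i ω = d then (1:ℝ) else 0))
    (hπ01 : ∀ i d, 0 < π i d ∧ π i d < 1)
    (dk dl : Δ) (hkl : dk ≠ dl)
    -- joint probabilities within exposure dk, within dl, and across (dk, dl)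
    (πijk πijl πc : Fin N → Fin N → ℝ)
    (hπijk : ∀ i j, πijk i j = ∑ ω, p ω *
      ((if D i ω = dk then (1:ℝ) else 0) * (if D j ω = dk then (1:ℝ) else 0)))
    (hπijl : ∀ i j, πijl i j = ∑ ω, p ω *
      ((if D i ω = dl then (1:ℝ) else 0) * (if D j ω = dl then (1:ℝ) else 0)))
    (hπc : ∀ i j, πc i j = ∑ ω, p ω *
      ((if D i ω = dk then (1:ℝ) else 0) * (if D j ω = dl then (1:ℝ) else 0)))
    -- HT total estimators
    (Yk Yl : Ωs → ℝ)
    (hYk : ∀ ω, Yk ω = ∑ i, (if D i ω = dk then (1:ℝ) else 0) * y i dk / π i dk)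
    (hYl : ∀ ω, Yl ω = ∑ i, (if D i ω = dl then (1:ℝ) else 0) * y i dl / π i dl)
    -- covariance estimator with Young's-inequality correction
    (CovA : Ωs → ℝ)
    (hCovA : ∀ ω, CovA ω =
      (∑ i, ∑ j ∈ (Finset.univ.erase i).filter (fun j => 0 < πc i j),
        ((if D i ω = dk then (1:ℝ) else 0) * (if D j ω = dl then (1:ℝ) else 0) / πc i j)
          * (y i dk / π i dk) * (y j dl / π j dl) * (πc i j - π i dk * π j dl))
      - ∑ i, ∑ j ∈ Finset.univ.filter (fun j => πc i j = 0),
          ((if D i ω = dk then (1:ℝ) else 0) * y i dk ^ 2 / (2 * π i dk)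
            + (if D j ω = dl then (1:ℝ) else 0) * y j dl ^ 2 / (2 * π j dl)))
    -- HT variance estimators and their correction terms for dk and dl
    (Vk Vl A2k A2l : Ωs → ℝ)
    (hVk : ∀ ω, Vk ω =
      ∑ i, (if D i ω = dk then (1:ℝ) else 0) * (1 - π i dk) * (y i dk / π i dk) ^ 2
      + ∑ i, ∑ j ∈ (Finset.univ.erase i).filter (fun j => 0 < πijk i j),
          (if D i ω = dk then (1:ℝ) else 0) * (if D j ω = dk then (1:ℝ) else 0)
            * ((πijk i j - π i dk * π j dk) / πijk i j)
            * (y i dk / π i dk) * (y j dk / π j dk))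
    (hVl : ∀ ω, Vl ω =
      ∑ i, (if D i ω = dl then (1:ℝ) else 0) * (1 - π i dl) * (y i dl / π i dl) ^ 2
      + ∑ i, ∑ j ∈ (Finset.univ.erase i).filter (fun j => 0 < πijl i j),
          (if D i ω = dl then (1:ℝ) else 0) * (if D j ω = dl then (1:ℝ) else 0)
            * ((πijl i j - π i dl * π j dl) / πijl i j)
            * (y i dl / π i dl) * (y j dl / π j dl))
    (hA2k : ∀ ω, A2k ω = ∑ i, ∑ j ∈ (Finset.univ.erase i).filter (fun j => πijk i j = 0),
        ((if D i ω = dk then (1:ℝ) else 0) * y i dk ^ 2 / (2 * π i dk)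
          + (if D j ω = dk then (1:ℝ) else 0) * y j dk ^ 2 / (2 * π j dk)))
    (hA2l : ∀ ω, A2l ω = ∑ i, ∑ j ∈ (Finset.univ.erase i).filter (fun j => πijl i j = 0),
        ((if D i ω = dl then (1:ℝ) else 0) * y i dl ^ 2 / (2 * π i dl)
          + (if D j ω = dl then (1:ℝ) else 0) * y j dl ^ 2 / (2 * π j dl))) :
    expect p CovA ≤ Cov' p Yk Yl
    ∧ expect p (fun ω => (1 / (N : ℝ) ^ 2)
          * (Vk ω + A2k ω + Vl ω + A2l ω - 2 * CovA ω))
        ≥ Var' p (fun ω => (1 / (N : ℝ)) * (Yk ω - Yl ω)) :=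
  stmt8_general p hp0 hp1 D y π hπ hπ01 dk dl hkl πijk πijl πc hπijk hπijl hπc Yk Yl hYk hYl CovA
    hCovA Vk Vl A2k A2l hVk hVl hA2k hA2l
end
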